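/- arXiv:2502.04742 — 6 statements merged into one kernel-verified Lean document; each statement's English description precedes it below -/
import Mathlib

section
/- Let L : ℝ^d × ℝ^d → ℝ be the Lagrangian L(y, ẏ) and suppose y : [0,T] → ℝ^d is C². For the one-interval quadrature L_d(y_k, y_{k+1}, h) = h·α·L(γ y_k + (1−γ) y_{k+1}, (y_{k+1}−y_k)/h) + h·(1−α)·L((1−γ) y_k + γ y_{k+1}, (y_{k+1}−y_k)/h) with α, γ ∈ [0,1], evaluated along y_k = y(t_k), y_{k+1} = y(t_k + h), the difference L_d(y(t_k), y(t_k+h), h) − ∫_{t_k}^{t_k+h} L(y(t), ẏ(t)) dt is O(h²) as h → 0; if moreover α(1−γ) + (1−α)γ = 1/2 (in particular if α = 1/2 or γ = 1/2) and L, y are sufficiently smooth, the difference is O(h³). -/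
open Asymptotics Set
open scoped ContDiff
section helpers
variable {E F : Type*} [NormedAddCommGroup E] [NormedSpace ℝ E]
  [NormedAddCommGroup F] [NormedSpace ℝ F]

lemma abs_le_abs_of_uIcc {s h : ℝ} (hs : s ∈ Set.uIcc 0 h) : |s| ≤ |h| := by
  rcases Set.mem_uIcc.1 hs with ⟨h1, h2⟩ | ⟨h1, h2⟩
  · rw [abs_of_nonneg h1]; exact le_trans h2 (le_abs_self h)
  · rw [abs_of_nonpos h2]; exact le_trans (neg_le_neg h1) (neg_le_abs h)

lemma mvt_aux {φ φ' : ℝ → E} {C h : ℝ}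
    (hd : ∀ s ∈ Set.uIcc 0 h, HasDerivAt φ (φ' s) s)
    (hb : ∀ s ∈ Set.uIcc 0 h, ‖φ' s‖ ≤ C) :
    ‖φ h - φ 0‖ ≤ C * |h| := by
  have := Convex.norm_image_sub_le_of_norm_hasDerivWithin_le
    (fun s hs => (hd s hs).hasDerivWithinAt) hb (convex_uIcc 0 h)
    (Set.left_mem_uIcc) (Set.right_mem_uIcc)
  simpa using this

lemma lip_ball {f : E → F} {x : E} (hf : ContDiffAt ℝ 1 f x) :
    ∃ K ε : ℝ, 0 < ε ∧ 0 ≤ K ∧ ∀ a b : E, ‖a - x‖ ≤ ε → ‖b - x‖ ≤ ε →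
      ‖f a - f b‖ ≤ K * ‖a - b‖ := by
  obtain ⟨K, t, ht, hl⟩ := hf.exists_lipschitzOnWith
  obtain ⟨ε, hε, hball⟩ := Metric.mem_nhds_iff.1 ht
  refine ⟨K, ε / 2, by positivity, K.coe_nonneg, fun a b ha hb => ?_⟩
  have ha' : a ∈ t := hball (by simpa [Metric.mem_ball, dist_eq_norm] using lt_of_le_of_lt ha (by linarith))
  have hb' : b ∈ t := hball (by simpa [Metric.mem_ball, dist_eq_norm] using lt_of_le_of_lt hb (by linarith))
  have := hl.dist_le_mul a ha' b hb'
  simpa [dist_eq_norm] using this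

lemma quad_aux {f : E → F} (z : E) (hf : ContDiff ℝ 2 f) :
    ∃ K ε : ℝ, 0 < ε ∧ 0 ≤ K ∧ ∀ w : E, ‖w‖ ≤ ε →
      ‖f (z + w) - f z - fderiv ℝ f z w‖ ≤ K * ‖w‖ ^ 2 := by
  have hfd : ContDiffAt ℝ 1 (fderiv ℝ f) z :=
    (hf.fderiv_right (le_refl _)).contDiffAt
  obtain ⟨K, ε, hε, hK, hlip⟩ := lip_ball hfd
  refine ⟨K, ε, hε, hK, fun w hw => ?_⟩
  have hconv : Convex ℝ (Metric.closedBall z ‖w‖) := convex_closedBall _ _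
  have hder : ∀ x ∈ Metric.closedBall z ‖w‖,
      HasFDerivWithinAt f (fderiv ℝ f x) (Metric.closedBall z ‖w‖) x :=
    fun x _ => (hf.differentiable (by norm_num) x).hasFDerivAt.hasFDerivWithinAt
  have hbd : ∀ x ∈ Metric.closedBall z ‖w‖, ‖fderiv ℝ f x - fderiv ℝ f z‖ ≤ K * ‖w‖ := by
    intro x hx
    have hx' : ‖x - z‖ ≤ ‖w‖ := by simpa [Metric.mem_closedBall, dist_eq_norm] using hx
    calc ‖fderiv ℝ f x - fderiv ℝ f z‖ ≤ K * ‖x - z‖ :=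
          hlip _ _ (le_trans hx' hw) (by simpa using hε.le)
      _ ≤ K * ‖w‖ := by nlinarith
  have := hconv.norm_image_sub_le_of_norm_hasFDerivWithin_le' hder hbd
    (Metric.mem_closedBall_self (norm_nonneg w))
    (show z + w ∈ _ by simp [Metric.mem_closedBall, dist_eq_norm])
  rw [show z + w - z = w by abel] at this
  calc ‖f (z + w) - f z - fderiv ℝ f z w‖ ≤ K * ‖w‖ * ‖w‖ := this
    _ = K * ‖w‖ ^ 2 := by ring

lemma taylor1_aux {u : ℝ → E} (hu : ContDiff ℝ 2 u) (t0 : ℝ) :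
    ∃ K ε : ℝ, 0 < ε ∧ 0 ≤ K ∧ ∀ h : ℝ, |h| ≤ ε →
      ‖u (t0 + h) - u t0 - h • deriv u t0‖ ≤ K * |h| ^ 2 := by
  have hu' : ContDiff ℝ (1 + 1) u := by
    rw [show ((1 : WithTop ℕ∞) + 1) = 2 by norm_num]; exact hu
  have hdiff : Differentiable ℝ u := hu.differentiable (by norm_num)
  have hd1 : ContDiffAt ℝ 1 (deriv u) t0 :=
    ((contDiff_succ_iff_deriv.mp hu').2.2).contDiffAt
  obtain ⟨K, ε, hε, hK, hlip⟩ := lip_ball hd1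
  refine ⟨K, ε, hε, hK, fun h hh => ?_⟩
  set φ : ℝ → E := fun s => u (t0 + s) - s • deriv u t0 with hφ
  have hder : ∀ s ∈ Set.uIcc 0 h,
      HasDerivAt φ (deriv u (t0 + s) - deriv u t0) s := by
    intro s _
    have h1 : HasDerivAt (fun s : ℝ => u (t0 + s)) (deriv u (t0 + s)) s := by
      have := HasDerivAt.scomp s (hdiff (t0 + s)).hasDerivAt
        ((hasDerivAt_id s).const_add t0)
      simpa [Function.comp_def] using this
    have h2 : HasDerivAt (fun s : ℝ => s • deriv u t0) (deriv u t0) s := by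
      simpa using (hasDerivAt_id s).smul_const (deriv u t0)
    exact h1.sub h2
  have hbd : ∀ s ∈ Set.uIcc 0 h, ‖deriv u (t0 + s) - deriv u t0‖ ≤ K * |h| := by
    intro s hs
    have hs' : |s| ≤ |h| := abs_le_abs_of_uIcc hs
    calc ‖deriv u (t0 + s) - deriv u t0‖ ≤ K * ‖(t0 + s) - t0‖ :=
          hlip _ _ (by simpa using le_trans hs' hh) (by simpa using hε.le)
      _ = K * |s| := by rw [show t0 + s - t0 = s by ring, Real.norm_eq_abs]
      _ ≤ K * |h| := by nlinarith
  have := mvt_aux hder hbd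
  have hφ0 : φ h - φ 0 = u (t0 + h) - u t0 - h • deriv u t0 := by
    simp [hφ]; abel
  rw [hφ0] at this
  calc ‖u (t0 + h) - u t0 - h • deriv u t0‖ ≤ K * |h| * |h| := this
    _ = K * |h| ^ 2 := by ring

lemma taylor2_aux {u : ℝ → E} (hu : ContDiff ℝ 3 u) (t0 : ℝ) :
    ∃ K ε : ℝ, 0 < ε ∧ 0 ≤ K ∧ ∀ h : ℝ, |h| ≤ ε →
      ‖u (t0 + h) - u t0 - h • deriv u t0 - (h ^ 2 / 2) • deriv (deriv u) t0‖
        ≤ K * |h| ^ 3 := by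
  have hu' : ContDiff ℝ (2 + 1) u := by
    rw [show ((2 : WithTop ℕ∞) + 1) = 3 by norm_num]; exact hu
  have hdu : ContDiff ℝ 2 (deriv u) := (contDiff_succ_iff_deriv.mp hu').2.2
  have hdiff : Differentiable ℝ u := hu.differentiable (by norm_num)
  obtain ⟨K, ε, hε, hK, hT1⟩ := taylor1_aux hdu t0
  refine ⟨K, ε, hε, hK, fun h hh => ?_⟩
  set v := deriv u t0
  set a := deriv (deriv u) t0
  set φ : ℝ → E := fun s => u (t0 + s) - s • v - (s ^ 2 / 2) • a with hφ
  have hder : ∀ s ∈ Set.uIcc 0 h,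
      HasDerivAt φ (deriv u (t0 + s) - v - s • a) s := by
    intro s _
    have h1 : HasDerivAt (fun s : ℝ => u (t0 + s)) (deriv u (t0 + s)) s := by
      have := HasDerivAt.scomp s (hdiff (t0 + s)).hasDerivAt
        ((hasDerivAt_id s).const_add t0)
      simpa [Function.comp_def] using this
    have h2 : HasDerivAt (fun s : ℝ => s • v) v s := by
      simpa using (hasDerivAt_id s).smul_const v
    have h3 : HasDerivAt (fun s : ℝ => (s ^ 2 / 2) • a) (s • a) s := by
      have hp : HasDerivAt (fun s : ℝ => s ^ 2 / 2) s s := by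
        have := (hasDerivAt_pow 2 s).div_const 2
        simpa using this.congr_deriv (by push_cast; ring)
      simpa using hp.smul_const a
    exact (h1.sub h2).sub h3
  have hbd : ∀ s ∈ Set.uIcc 0 h, ‖deriv u (t0 + s) - v - s • a‖ ≤ K * |h| ^ 2 := by
    intro s hs
    have hs' : |s| ≤ |h| := abs_le_abs_of_uIcc hs
    calc ‖deriv u (t0 + s) - v - s • a‖ ≤ K * |s| ^ 2 := hT1 s (le_trans hs' hh)
      _ ≤ K * |h| ^ 2 := mul_le_mul_of_nonneg_left (pow_le_pow_left₀ (abs_nonneg s) hs' 2) hK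
  have := mvt_aux hder hbd
  have hφ0 : φ h - φ 0 = u (t0 + h) - u t0 - h • v - (h ^ 2 / 2) • a := by
    simp [hφ]; abel
  rw [hφ0] at this
  calc ‖u (t0 + h) - u t0 - h • v - (h ^ 2 / 2) • a‖ ≤ K * |h| ^ 2 * |h| := this
    _ = K * |h| ^ 3 := by ring

end helpers

set_option maxHeartbeats 1000000 in
theorem stmt_3 (d : ℕ)
    (L : (Fin d → ℝ) × (Fin d → ℝ) → ℝ)
    (y : ℝ → (Fin d → ℝ))
    (α γ : ℝ) (hα : α ∈ Set.Icc (0:ℝ) 1) (hγ : γ ∈ Set.Icc (0:ℝ) 1)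
    (hL : ContDiff ℝ 2 L) (hy : ContDiff ℝ 2 y)
    (tk : ℝ)
    (Ld : ℝ → ℝ)
    (hLd : ∀ h : ℝ, Ld h =
      h * α * L (γ • y tk + (1 - γ) • y (tk + h), h⁻¹ • (y (tk + h) - y tk)) +
      h * (1 - α) * L ((1 - γ) • y tk + γ • y (tk + h), h⁻¹ • (y (tk + h) - y tk))) :
    ((fun h : ℝ => Ld h - ∫ t in tk..(tk + h), L (y t, deriv y t))
        =O[nhds 0] fun h : ℝ => h ^ 2) ∧
    (α * (1 - γ) + (1 - α) * γ = 1/2 → ContDiff ℝ (⊤ : ℕ∞) L → ContDiff ℝ (⊤ : ℕ∞) y →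
      (fun h : ℝ => Ld h - ∫ t in tk..(tk + h), L (y t, deriv y t))
        =O[nhds 0] fun h : ℝ => h ^ 3) := by
  obtain ⟨hα0, hα1⟩ := hα
  obtain ⟨hγ0, hγ1⟩ := hγ
  set p := y tk with hp
  set v := deriv y tk with hv
  set z : (Fin d → ℝ) × (Fin d → ℝ) := (p, v) with hz
  set g : ℝ → ℝ := fun t => L (y t, deriv y t) with hgdef
  set J : ℝ → ℝ := fun u => ∫ t in tk..u, g t with hJdef
  -- basic smoothness facts
  have hy2 : ContDiff ℝ (1 + 1) y := by
    rw [show ((1 : WithTop ℕ∞) + 1) = 2 by norm_num]; exact hy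
  have hy1 : ContDiff ℝ 1 (deriv y) := (contDiff_succ_iff_deriv.mp hy2).2.2
  have hcy : Continuous y := hy.continuous
  have hcdy : Continuous (deriv y) := hy1.continuous
  have hg_cont : Continuous g := hL.continuous.comp (hcy.prodMk hcdy)
  have hJd : ∀ s : ℝ, HasDerivAt J (g s) s := fun s =>
    intervalIntegral.integral_hasDerivAt_right
      (hg_cont.intervalIntegrable _ _)
      hg_cont.aestronglyMeasurable.stronglyMeasurableAtFilter
      hg_cont.continuousAt
  have hJdiff : Differentiable ℝ J := fun s => (hJd s).differentiableAt
  have hderivJ : deriv J = g := funext fun s => (hJd s).deriv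
  have hg1 : ContDiff ℝ 1 g :=
    (hL.of_le one_le_two).comp ((hy.of_le one_le_two).prodMk hy1)
  have hJ2 : ContDiff ℝ 2 J := by
    rw [show ((2 : WithTop ℕ∞)) = 1 + 1 by norm_num]
    exact contDiff_succ_iff_deriv.mpr ⟨hJdiff, by simp, by rw [hderivJ]; exact hg1⟩
  have hJtk : J tk = 0 := intervalIntegral.integral_same
  have hgtk : g tk = L z := rfl
  -- Lipschitz constants
  obtain ⟨Ky, εy, hεy, hKy, hlipy⟩ := lip_ball (x := tk) (hy.of_le one_le_two).contDiffAt
  obtain ⟨KL, εL, hεL, hKL, hlipL⟩ := lip_ball (x := z) (hL.of_le one_le_two).contDiffAt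
  obtain ⟨K1, ε1, hε1, hK1, hT1⟩ := taylor1_aux hy tk
  obtain ⟨KI, εI, hεI, hKI, hTI⟩ := taylor1_aux hJ2 tk
  -- Taylor of J rephrased
  have hTI' : ∀ h : ℝ, |h| ≤ εI → |J (tk + h) - h * g tk| ≤ KI * |h| ^ 2 := by
    intro h hh
    have := hTI h hh
    rw [hJtk, hderivJ] at this
    simpa [smul_eq_mul] using this
  -- curve displacement bound
  have hdisp : ∀ h : ℝ, |h| ≤ εy → ‖y (tk + h) - p‖ ≤ Ky * |h| := by
    intro h hh
    have h1 : ‖(tk + h) - tk‖ ≤ εy := by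
      rw [show tk + h - tk = h by ring, Real.norm_eq_abs]; exact hh
    have h2 : ‖tk - tk‖ ≤ εy := by simpa using hεy.le
    have := hlipy (tk + h) tk h1 h2
    calc ‖y (tk + h) - p‖ = ‖y (tk + h) - y tk‖ := by rw [hp]
      _ ≤ Ky * ‖(tk + h) - tk‖ := this
      _ = Ky * |h| := by rw [show tk + h - tk = h by ring, Real.norm_eq_abs]
  constructor
  · -- Part 1 : O(h²)
    set δ := min ε1 (min εy (min εI (εL / (Ky + K1 + 1)))) with hδdef
    have hδ : 0 < δ := by
      refine lt_min hε1 (lt_min hεy (lt_min hεI ?_))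
      positivity
    have key : ∀ h : ℝ, |h| ≤ δ →
        |Ld h - J (tk + h)| ≤ (2 * KL * (Ky + K1) + KI) * |h| ^ 2 := by
      intro h hh
      have hh1 : |h| ≤ ε1 := le_trans hh (min_le_left _ _)
      have hhy : |h| ≤ εy := le_trans hh (le_trans (min_le_right _ _) (min_le_left _ _))
      have hhI : |h| ≤ εI :=
        le_trans hh (le_trans (min_le_right _ _) (le_trans (min_le_right _ _) (min_le_left _ _)))
      have hhL : |h| ≤ εL / (Ky + K1 + 1) :=
        le_trans hh (le_trans (min_le_right _ _) (le_trans (min_le_right _ _) (min_le_right _ _)))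
      rcases eq_or_ne h 0 with rfl | hne
      · have hLd0 : Ld 0 = 0 := by rw [hLd 0]; ring
        rw [hLd0, show tk + (0:ℝ) = tk by ring, hJtk]
        norm_num
      · set W : Fin d → ℝ := h⁻¹ • (y (tk + h) - y tk) with hWdef
        set A : Fin d → ℝ := γ • y tk + (1 - γ) • y (tk + h) with hAdef
        set B : Fin d → ℝ := (1 - γ) • y tk + γ • y (tk + h) with hBdef
        have habs : 0 < |h| := abs_pos.mpr hne
        have hWv : ‖W - v‖ ≤ K1 * |h| := by
          have heq : W - v = h⁻¹ • (y (tk + h) - p - h • v) := by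
            rw [hWdef, hp]; match_scalars <;> field_simp
          rw [heq, norm_smul, Real.norm_eq_abs, abs_inv]
          have h2 := hT1 h hh1
          rw [← hp, ← hv] at h2
          calc |h|⁻¹ * ‖y (tk + h) - p - h • v‖ ≤ |h|⁻¹ * (K1 * |h| ^ 2) :=
                mul_le_mul_of_nonneg_left h2 (by positivity)
            _ = K1 * |h| := by
                rw [pow_two]
                field_simp
        have hAp : ‖A - p‖ ≤ Ky * |h| := by
          have heq : A - p = (1 - γ) • (y (tk + h) - p) := by
            rw [hAdef, hp]; module
          rw [heq, norm_smul, Real.norm_eq_abs]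
          calc |1 - γ| * ‖y (tk + h) - p‖ ≤ 1 * (Ky * |h|) :=
                mul_le_mul (by rw [abs_of_nonneg (by linarith)]; linarith)
                  (hdisp h hhy) (norm_nonneg _) zero_le_one
            _ = Ky * |h| := by ring
        have hBp : ‖B - p‖ ≤ Ky * |h| := by
          have heq : B - p = γ • (y (tk + h) - p) := by
            rw [hBdef, hp]; module
          rw [heq, norm_smul, Real.norm_eq_abs]
          calc |γ| * ‖y (tk + h) - p‖ ≤ 1 * (Ky * |h|) :=
                mul_le_mul (by rw [abs_of_nonneg hγ0]; linarith)
                  (hdisp h hhy) (norm_nonneg _) zero_le_one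
            _ = Ky * |h| := by ring
        have hKK : (0:ℝ) ≤ Ky + K1 := by linarith
        have hball : (Ky + K1) * |h| ≤ εL := by
          have h1 : |h| * (Ky + K1 + 1) ≤ εL := (le_div_iff₀ (by positivity)).1 hhL
          nlinarith [abs_nonneg h]
        have hAz : ‖(A, W) - z‖ ≤ (Ky + K1) * |h| := by
          rw [hz]
          rw [Prod.norm_def]
          apply max_le
          · simpa using le_trans hAp (by nlinarith [abs_nonneg h, mul_nonneg hK1 (abs_nonneg h)])
          · simpa using le_trans hWv (by nlinarith [abs_nonneg h, mul_nonneg hKy (abs_nonneg h)])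
        have hBz : ‖(B, W) - z‖ ≤ (Ky + K1) * |h| := by
          rw [hz]
          rw [Prod.norm_def]
          apply max_le
          · simpa using le_trans hBp (by nlinarith [abs_nonneg h, mul_nonneg hK1 (abs_nonneg h)])
          · simpa using le_trans hWv (by nlinarith [abs_nonneg h, mul_nonneg hKy (abs_nonneg h)])
        have hLA : |L (A, W) - L z| ≤ KL * ((Ky + K1) * |h|) := by
          have h1 := hlipL (A, W) z (le_trans hAz hball) (by simpa using hεL.le)
          rw [Real.norm_eq_abs] at h1
          exact le_trans h1 (mul_le_mul_of_nonneg_left hAz hKL)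
        have hLB : |L (B, W) - L z| ≤ KL * ((Ky + K1) * |h|) := by
          have h1 := hlipL (B, W) z (le_trans hBz hball) (by simpa using hεL.le)
          rw [Real.norm_eq_abs] at h1
          exact le_trans h1 (mul_le_mul_of_nonneg_left hBz hKL)
        have hsplit : Ld h - J (tk + h) =
            h * α * (L (A, W) - L z) + h * (1 - α) * (L (B, W) - L z)
              + (h * g tk - J (tk + h)) := by
          rw [hLd h, hgtk, ← hAdef, ← hBdef, ← hWdef]
          ring
        rw [hsplit]
        have e1 : |h * α * (L (A, W) - L z)| ≤ |h| * (KL * ((Ky + K1) * |h|)) := by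
          rw [abs_mul, abs_mul, abs_of_nonneg hα0, mul_assoc]
          refine mul_le_mul_of_nonneg_left ?_ (abs_nonneg h)
          nlinarith [abs_nonneg (L (A, W) - L z)]
        have e2 : |h * (1 - α) * (L (B, W) - L z)| ≤ |h| * (KL * ((Ky + K1) * |h|)) := by
          rw [abs_mul, abs_mul, abs_of_nonneg (by linarith : (0:ℝ) ≤ 1 - α), mul_assoc]
          refine mul_le_mul_of_nonneg_left ?_ (abs_nonneg h)
          nlinarith [abs_nonneg (L (B, W) - L z)]
        have e3 : |h * g tk - J (tk + h)| ≤ KI * |h| ^ 2 := by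
          have := hTI' h hhI
          rwa [abs_sub_comm]
        calc |h * α * (L (A, W) - L z) + h * (1 - α) * (L (B, W) - L z)
              + (h * g tk - J (tk + h))|
            ≤ |h * α * (L (A, W) - L z)| + |h * (1 - α) * (L (B, W) - L z)|
              + |h * g tk - J (tk + h)| :=
              le_trans (abs_add_le _ _) (by gcongr; exact abs_add_le _ _)
          _ ≤ |h| * (KL * ((Ky + K1) * |h|)) + |h| * (KL * ((Ky + K1) * |h|))
              + KI * |h| ^ 2 := by gcongr
          _ = (2 * KL * (Ky + K1) + KI) * |h| ^ 2 := by ring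
    rw [isBigO_iff]
    refine ⟨2 * KL * (Ky + K1) + KI, ?_⟩
    filter_upwards [Metric.closedBall_mem_nhds (0:ℝ) hδ] with h hh
    have hh2 : |h| ≤ δ := by
      simpa [Real.dist_eq] using hh
    have hn : ‖h ^ 2‖ = |h| ^ 2 := by rw [Real.norm_eq_abs, abs_pow]
    show ‖Ld h - J (tk + h)‖ ≤ (2 * KL * (Ky + K1) + KI) * ‖h ^ 2‖
    rw [Real.norm_eq_abs, hn]
    exact key h hh2
  · -- Part 2 : O(h³)
    intro hc hL' hy'
    have hy3 : ContDiff ℝ 3 y := hy'.of_le (WithTop.coe_le_coe.mpr le_top)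
    have hy3' : ContDiff ℝ (2 + 1) y := by
      rw [show ((2 : WithTop ℕ∞) + 1) = 3 by norm_num]; exact hy3
    have hdy2 : ContDiff ℝ 2 (deriv y) := (contDiff_succ_iff_deriv.mp hy3').2.2
    have hg2 : ContDiff ℝ 2 g := hL.comp (hy.prodMk hdy2)
    have hJ3 : ContDiff ℝ 3 J := by
      rw [show ((3 : WithTop ℕ∞)) = 2 + 1 by norm_num]
      exact contDiff_succ_iff_deriv.mpr ⟨hJdiff, by simp, by rw [hderivJ]; exact hg2⟩
    set a := deriv (deriv y) tk with ha
    set D := fderiv ℝ L z with hDdef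
    have hzd : HasDerivAt (fun t => (y t, deriv y t)) (v, a) tk :=
      ((hy.differentiable (by norm_num) tk).hasDerivAt).prodMk
        ((hdy2.differentiable (by norm_num) tk).hasDerivAt)
    have hDL : HasFDerivAt L D z := (hL.differentiable (by norm_num) z).hasFDerivAt
    have hgd : HasDerivAt g (D (v, a)) tk := by
      have := hDL.comp_hasDerivAt tk hzd
      exact this
    have hdg : deriv g tk = D (v, a) := hgd.deriv
    obtain ⟨Kq, εq, hεq, hKq, hQ⟩ := quad_aux z hL
    obtain ⟨K2, ε2, hε2, hK2, hT2⟩ := taylor2_aux hy3 tk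
    obtain ⟨KI2, εI2, hεI2, hKI2, hTI2⟩ := taylor2_aux hJ3 tk
    have hTI2' : ∀ h : ℝ, |h| ≤ εI2 →
        |J (tk + h) - h * g tk - h ^ 2 / 2 * D (v, a)| ≤ KI2 * |h| ^ 3 := by
      intro h hh
      have := hTI2 h hh
      rw [hJtk, hderivJ, hdg] at this
      simpa [smul_eq_mul] using this
    set C2 := Kq * (Ky + K1) ^ 2 + ‖D‖ * (K1 / 2 + K2) + KI2 with hC2
    set δ2 := min ε1 (min ε2 (min εy (min εI2 (εq / (Ky + K1 + 1))))) with hδ2def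
    have hδ2 : 0 < δ2 := by
      refine lt_min hε1 (lt_min hε2 (lt_min hεy (lt_min hεI2 ?_)))
      positivity
    have key2 : ∀ h : ℝ, |h| ≤ δ2 → |Ld h - J (tk + h)| ≤ C2 * |h| ^ 3 := by
      intro h hh
      have hh1 : |h| ≤ ε1 := le_trans hh (min_le_left _ _)
      have hh2 : |h| ≤ ε2 := le_trans hh (le_trans (min_le_right _ _) (min_le_left _ _))
      have hhy : |h| ≤ εy :=
        le_trans hh (le_trans (min_le_right _ _) (le_trans (min_le_right _ _) (min_le_left _ _)))
      have hhI2 : |h| ≤ εI2 :=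
        le_trans hh (le_trans (min_le_right _ _) (le_trans (min_le_right _ _)
          (le_trans (min_le_right _ _) (min_le_left _ _))))
      have hhq : |h| ≤ εq / (Ky + K1 + 1) :=
        le_trans hh (le_trans (min_le_right _ _) (le_trans (min_le_right _ _)
          (le_trans (min_le_right _ _) (min_le_right _ _))))
      have hC2nn : 0 ≤ C2 := by
        rw [hC2]
        have := norm_nonneg D
        positivity
      rcases eq_or_ne h 0 with rfl | hne
      · have hLd0 : Ld 0 = 0 := by rw [hLd 0]; ring
        rw [hLd0, show tk + (0:ℝ) = tk by ring, hJtk]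
        simpa using mul_nonneg hC2nn (by positivity)
      · set W : Fin d → ℝ := h⁻¹ • (y (tk + h) - y tk) with hWdef
        set A : Fin d → ℝ := γ • y tk + (1 - γ) • y (tk + h) with hAdef
        set B : Fin d → ℝ := (1 - γ) • y tk + γ • y (tk + h) with hBdef
        have habs : 0 < |h| := abs_pos.mpr hne
        have hWv : ‖W - v‖ ≤ K1 * |h| := by
          have heq : W - v = h⁻¹ • (y (tk + h) - p - h • v) := by
            rw [hWdef, hp]; match_scalars <;> field_simp
          rw [heq, norm_smul, Real.norm_eq_abs, abs_inv]
          have hT := hT1 h hh1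
          rw [← hp, ← hv] at hT
          calc |h|⁻¹ * ‖y (tk + h) - p - h • v‖ ≤ |h|⁻¹ * (K1 * |h| ^ 2) :=
                mul_le_mul_of_nonneg_left hT (by positivity)
            _ = K1 * |h| := by
                rw [pow_two]
                field_simp
        have hAp : ‖A - p‖ ≤ Ky * |h| := by
          have heq : A - p = (1 - γ) • (y (tk + h) - p) := by
            rw [hAdef, hp]; module
          rw [heq, norm_smul, Real.norm_eq_abs]
          calc |1 - γ| * ‖y (tk + h) - p‖ ≤ 1 * (Ky * |h|) :=
                mul_le_mul (by rw [abs_of_nonneg (by linarith)]; linarith)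
                  (hdisp h hhy) (norm_nonneg _) zero_le_one
            _ = Ky * |h| := by ring
        have hBp : ‖B - p‖ ≤ Ky * |h| := by
          have heq : B - p = γ • (y (tk + h) - p) := by
            rw [hBdef, hp]; module
          rw [heq, norm_smul, Real.norm_eq_abs]
          calc |γ| * ‖y (tk + h) - p‖ ≤ 1 * (Ky * |h|) :=
                mul_le_mul (by rw [abs_of_nonneg hγ0]; linarith)
                  (hdisp h hhy) (norm_nonneg _) zero_le_one
            _ = Ky * |h| := by ring
        have hKK : (0:ℝ) ≤ Ky + K1 := by linarith
        have hballq : (Ky + K1) * |h| ≤ εq := by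
          have h1 : |h| * (Ky + K1 + 1) ≤ εq := (le_div_iff₀ (by positivity)).1 hhq
          nlinarith [abs_nonneg h]
        set wA : (Fin d → ℝ) × (Fin d → ℝ) := (A, W) - z with hwAdef
        set wB : (Fin d → ℝ) × (Fin d → ℝ) := (B, W) - z with hwBdef
        have hKyb : Ky * |h| ≤ (Ky + K1) * |h| :=
          mul_le_mul_of_nonneg_right (le_add_of_nonneg_right hK1) (abs_nonneg h)
        have hK1b : K1 * |h| ≤ (Ky + K1) * |h| :=
          mul_le_mul_of_nonneg_right (le_add_of_nonneg_left hKy) (abs_nonneg h)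
        have hwAnorm : ‖wA‖ ≤ (Ky + K1) * |h| := by
          rw [hwAdef, hz, Prod.norm_def]
          exact max_le (le_trans hAp hKyb) (le_trans hWv hK1b)
        have hwBnorm : ‖wB‖ ≤ (Ky + K1) * |h| := by
          rw [hwBdef, hz, Prod.norm_def]
          exact max_le (le_trans hBp hKyb) (le_trans hWv hK1b)
        have hzA : z + wA = (A, W) := by rw [hwAdef]; abel
        have hzB : z + wB = (B, W) := by rw [hwBdef]; abel
        set RA := L (z + wA) - L z - D wA with hRAdef
        set RB := L (z + wB) - L z - D wB with hRBdef
        have hLA2 : L (A, W) = L z + D wA + RA := by rw [← hzA, hRAdef]; ring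
        have hLB2 : L (B, W) = L z + D wB + RB := by rw [← hzB, hRBdef]; ring
        have hQA : |RA| ≤ Kq * ((Ky + K1) * |h|) ^ 2 := by
          have h1 := hQ wA (le_trans hwAnorm hballq)
          rw [← hRAdef, Real.norm_eq_abs] at h1
          calc |RA| ≤ Kq * ‖wA‖ ^ 2 := h1
            _ ≤ Kq * ((Ky + K1) * |h|) ^ 2 :=
                mul_le_mul_of_nonneg_left
                  (pow_le_pow_left₀ (norm_nonneg _) hwAnorm 2) hKq
        have hQB : |RB| ≤ Kq * ((Ky + K1) * |h|) ^ 2 := by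
          have h1 := hQ wB (le_trans hwBnorm hballq)
          rw [← hRBdef, Real.norm_eq_abs] at h1
          calc |RB| ≤ Kq * ‖wB‖ ^ 2 := h1
            _ ≤ Kq * ((Ky + K1) * |h|) ^ 2 :=
                mul_le_mul_of_nonneg_left
                  (pow_le_pow_left₀ (norm_nonneg _) hwBnorm 2) hKq
        -- combination of linear terms
        set u : (Fin d → ℝ) × (Fin d → ℝ) := (((1:ℝ)/2) • (y (tk + h) - p), W - v) with hudef
        have hwA1 : wA = ((1 - γ) • (y (tk + h) - p), W - v) := by
          have h1 : A - p = (1 - γ) • (y (tk + h) - p) := by rw [hAdef, hp]; module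
          rw [hwAdef, hz]
          exact Prod.ext (by simpa using h1) (by simp)
        have hwB1 : wB = (γ • (y (tk + h) - p), W - v) := by
          have h1 : B - p = γ • (y (tk + h) - p) := by rw [hBdef, hp]; module
          rw [hwBdef, hz]
          exact Prod.ext (by simpa using h1) (by simp)
        have hcomb : α • wA + (1 - α) • wB = u := by
          rw [hwA1, hwB1, hudef]
          refine Prod.ext ?_ ?_
          · show α • ((1 - γ) • (y (tk + h) - p)) + (1 - α) • (γ • (y (tk + h) - p))
              = ((1:ℝ)/2) • (y (tk + h) - p)
            rw [smul_smul, smul_smul, ← add_smul, hc]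
          · show α • (W - v) + (1 - α) • (W - v) = W - v
            rw [← add_smul]
            norm_num
        have hDcomb : α * D wA + (1 - α) * D wB = D u := by
          rw [← hcomb, map_add, map_smul, map_smul, smul_eq_mul, smul_eq_mul]
        have hLdexp : Ld h = h * L z + h * D u + h * (α * RA + (1 - α) * RB) := by
          have h1 : Ld h = h * L z + h * (α * D wA + (1 - α) * D wB)
              + h * (α * RA + (1 - α) * RB) := by
            rw [hLd h, ← hAdef, ← hBdef, ← hWdef, hLA2, hLB2]
            ring
          rw [h1, hDcomb]
        -- bound the middle linear term
        have hterm3 : |h * D u - h ^ 2 / 2 * D (v, a)| ≤ ‖D‖ * ((K1 / 2 + K2) * |h| ^ 3) := by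
          have hT := hT1 h hh1
          rw [← hp, ← hv] at hT
          have hT2' := hT2 h hh2
          rw [← hp, ← hv, ← ha] at hT2'
          have hq1 : h • (((1:ℝ)/2) • (y (tk + h) - p)) - (h ^ 2 / 2) • v
              = (h / 2) • (y (tk + h) - p - h • v) := by module
          have hq2 : h • (W - v) - (h ^ 2 / 2) • a
              = y (tk + h) - p - h • v - (h ^ 2 / 2) • a := by
            rw [hWdef, hp]
            match_scalars <;> field_simp
          have e : h * D u - h ^ 2 / 2 * D (v, a)
              = D ((h / 2) • (y (tk + h) - p - h • v),
                  y (tk + h) - p - h • v - (h ^ 2 / 2) • a) := by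
            rw [← smul_eq_mul, ← smul_eq_mul, ← map_smul, ← map_smul, ← map_sub]
            congr 1
            rw [hudef, Prod.smul_mk, Prod.smul_mk, Prod.mk_sub_mk, hq1, hq2]
          have hn1 : ‖(h / 2) • (y (tk + h) - p - h • v)‖ ≤ (K1 / 2) * |h| ^ 3 := by
            rw [norm_smul, Real.norm_eq_abs, abs_div, show |(2:ℝ)| = 2 by norm_num]
            calc |h| / 2 * ‖y (tk + h) - p - h • v‖ ≤ |h| / 2 * (K1 * |h| ^ 2) :=
                  mul_le_mul_of_nonneg_left hT (by positivity)
              _ = (K1 / 2) * |h| ^ 3 := by ring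
          have hm1 : (K1 / 2) * |h| ^ 3 ≤ (K1 / 2 + K2) * |h| ^ 3 :=
            mul_le_mul_of_nonneg_right (le_add_of_nonneg_right hK2)
              (pow_nonneg (abs_nonneg h) 3)
          have hm2 : K2 * |h| ^ 3 ≤ (K1 / 2 + K2) * |h| ^ 3 :=
            mul_le_mul_of_nonneg_right (le_add_of_nonneg_left (by positivity))
              (pow_nonneg (abs_nonneg h) 3)
          have hnorm : ‖((h / 2) • (y (tk + h) - p - h • v),
              y (tk + h) - p - h • v - (h ^ 2 / 2) • a)‖ ≤ (K1 / 2 + K2) * |h| ^ 3 :=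
            norm_prod_le_iff.mpr ⟨le_trans hn1 hm1, le_trans hT2' hm2⟩
          rw [e]
          calc |D ((h / 2) • (y (tk + h) - p - h • v),
                y (tk + h) - p - h • v - (h ^ 2 / 2) • a)|
              = ‖D ((h / 2) • (y (tk + h) - p - h • v),
                y (tk + h) - p - h • v - (h ^ 2 / 2) • a)‖ := (Real.norm_eq_abs _).symm
            _ ≤ ‖D‖ * ‖((h / 2) • (y (tk + h) - p - h • v),
                y (tk + h) - p - h • v - (h ^ 2 / 2) • a)‖ := D.le_opNorm _
            _ ≤ ‖D‖ * ((K1 / 2 + K2) * |h| ^ 3) :=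
                mul_le_mul_of_nonneg_left hnorm (norm_nonneg D)
        -- bound the quadratic remainder term
        have hterm2 : |h * (α * RA + (1 - α) * RB)| ≤ Kq * (Ky + K1) ^ 2 * |h| ^ 3 := by
          rw [abs_mul]
          have hin : |α * RA + (1 - α) * RB| ≤ Kq * ((Ky + K1) * |h|) ^ 2 := by
            calc |α * RA + (1 - α) * RB| ≤ |α * RA| + |(1 - α) * RB| := abs_add_le _ _
              _ = α * |RA| + (1 - α) * |RB| := by
                  rw [abs_mul, abs_mul, abs_of_nonneg hα0,
                    abs_of_nonneg (by linarith : (0:ℝ) ≤ 1 - α)]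
              _ ≤ α * (Kq * ((Ky + K1) * |h|) ^ 2) + (1 - α) * (Kq * ((Ky + K1) * |h|) ^ 2) :=
                  add_le_add (mul_le_mul_of_nonneg_left hQA hα0)
                    (mul_le_mul_of_nonneg_left hQB (by linarith))
              _ = Kq * ((Ky + K1) * |h|) ^ 2 := by ring
          calc |h| * |α * RA + (1 - α) * RB| ≤ |h| * (Kq * ((Ky + K1) * |h|) ^ 2) :=
                mul_le_mul_of_nonneg_left hin (abs_nonneg h)
            _ = Kq * (Ky + K1) ^ 2 * |h| ^ 3 := by ring
        -- bound the integral term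
        have hterm1 : |h * L z + h ^ 2 / 2 * D (v, a) - J (tk + h)| ≤ KI2 * |h| ^ 3 := by
          have h1 := hTI2' h hhI2
          rw [hgtk] at h1
          rw [show h * L z + h ^ 2 / 2 * D (v, a) - J (tk + h)
              = -(J (tk + h) - h * L z - h ^ 2 / 2 * D (v, a)) by ring, abs_neg]
          exact h1
        have hdecomp : Ld h - J (tk + h) = h * (α * RA + (1 - α) * RB)
            + (h * D u - h ^ 2 / 2 * D (v, a))
            + (h * L z + h ^ 2 / 2 * D (v, a) - J (tk + h)) := by
          rw [hLdexp]; ring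
        rw [hdecomp]
        calc |h * (α * RA + (1 - α) * RB) + (h * D u - h ^ 2 / 2 * D (v, a))
              + (h * L z + h ^ 2 / 2 * D (v, a) - J (tk + h))|
            ≤ |h * (α * RA + (1 - α) * RB)| + |h * D u - h ^ 2 / 2 * D (v, a)|
              + |h * L z + h ^ 2 / 2 * D (v, a) - J (tk + h)| :=
              le_trans (abs_add_le _ _) (by gcongr; exact abs_add_le _ _)
          _ ≤ Kq * (Ky + K1) ^ 2 * |h| ^ 3 + ‖D‖ * ((K1 / 2 + K2) * |h| ^ 3)
              + KI2 * |h| ^ 3 := by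
              refine add_le_add (add_le_add hterm2 ?_) hterm1
              calc |h * D u - h ^ 2 / 2 * D (v, a)|
                  = ‖h * D u - h ^ 2 / 2 * D (v, a)‖ := (Real.norm_eq_abs _).symm
                _ ≤ ‖D‖ * ((K1 / 2 + K2) * |h| ^ 3) := by
                    rw [Real.norm_eq_abs]; exact hterm3
          _ = C2 * |h| ^ 3 := by rw [hC2]; ring
    rw [isBigO_iff]
    refine ⟨C2, ?_⟩
    filter_upwards [Metric.closedBall_mem_nhds (0:ℝ) hδ2] with h hh
    have hh2 : |h| ≤ δ2 := by
      simpa [Real.dist_eq] using hh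
    have hn : ‖h ^ 3‖ = |h| ^ 3 := by rw [Real.norm_eq_abs, abs_pow]
    show ‖Ld h - J (tk + h)‖ ≤ C2 * ‖h ^ 3‖
    rw [Real.norm_eq_abs, hn]
    exact key2 h hh2
end

section
/- Let L : ℝ^{2d} × ℝ^{2d} → ℝ be a discrete Lagrangian L_d : ℝ^{2d} × ℝ^{2d} → ℝ (suppressing the fixed step size h), differentiable, and let Φ : ℝ → ℝ^{2d} → ℝ^{2d} be a one-parameter family of diffeomorphisms, differentiable in the parameter, with Φ_0 = id, such that L_d(Φ_s(y_k), Φ_s(y_{k+1})) = L_d(y_k, y_{k+1}) for all s, y_k, y_{k+1}. If a sequence y : Fin (N+1) → ℝ^{2d} satisfies the discrete Euler–Lagrange equations D₂L_d(y_{k−1}, y_k) + D₁L_d(y_k, y_{k+1}) = 0 for 1 ≤ k ≤ N−1, then the quantity I_k = D₂L_d(y_{k−1}, y_k) ⬝ (d/ds)|_{s=0} Φ_s(y_k) is constant in k for 1 ≤ k ≤ N, and equals −D₁L_d(y_k, y_{k+1}) ⬝ (d/ds)|_{s=0} Φ_s(y_k) for 0 ≤ k ≤ N−1. -/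
/-! Differentiating the invariance `L_d(Φ_s a, Φ_s b) = L_d(a, b)` at `s = 0` gives
`D₁L_d(a, b) ξ(a) + D₂L_d(a, b) ξ(b) = 0` for every pair `(a, b)`. Applied to `(y_k, y_{k+1})`
this says `I_{k+1} = -D₁L_d(y_k, y_{k+1}) ξ(y_k)`, and the discrete Euler–Lagrange equation at `k`
identifies the right-hand side with `I_k`. -/

section PartialDerivatives

variable {𝕜 E G : Type*} [NontriviallyNormedField 𝕜]
  [NormedAddCommGroup E] [NormedSpace 𝕜 E] [NormedAddCommGroup G] [NormedSpace 𝕜 G]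

theorem HasFDerivAt.apply_prod_eq_fderiv_fst_add_fderiv_snd {L : E × E → G} {L' : E × E →L[𝕜] G}
    {a b : E} (hL : HasFDerivAt L L' (a, b)) (u v : E) :
    L' (u, v) = fderiv 𝕜 (fun x => L (x, b)) a u + fderiv 𝕜 (fun x => L (a, x)) b v := by
  have h₁ : HasFDerivAt (fun x => L (x, b)) (L'.comp (.inl 𝕜 E E)) a :=
    hL.comp a (hasFDerivAt_prodMk_left a b)
  have h₂ : HasFDerivAt (fun x => L (a, x)) (L'.comp (.inr 𝕜 E E)) b :=
    hL.comp b (hasFDerivAt_prodMk_right a b)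
  rw [h₁.fderiv, h₂.fderiv, ContinuousLinearMap.comp_apply, ContinuousLinearMap.comp_apply,
    ← map_add, ContinuousLinearMap.inl_apply, ContinuousLinearMap.inr_apply, Prod.mk_add_mk,
    add_zero, zero_add]

theorem fderiv_fst_add_fderiv_snd_eq_zero_of_invariant {L : E × E → G} {γ₁ γ₂ : 𝕜 → E}
    {a b u v : E} (hL : DifferentiableAt 𝕜 L (a, b)) (hγ₁ : HasDerivAt γ₁ u 0)
    (hγ₂ : HasDerivAt γ₂ v 0) (hγ₁a : γ₁ 0 = a) (hγ₂b : γ₂ 0 = b)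
    (hinv : ∀ s, L (γ₁ s, γ₂ s) = L (a, b)) :
    fderiv 𝕜 (fun x => L (x, b)) a u + fderiv 𝕜 (fun x => L (a, x)) b v = 0 := by
  subst hγ₁a hγ₂b
  have hcomp : HasDerivAt (fun s => L (γ₁ s, γ₂ s)) (fderiv 𝕜 L (γ₁ 0, γ₂ 0) (u, v)) 0 :=
    hL.hasFDerivAt.comp_hasDerivAt 0 (hγ₁.prodMk hγ₂)
  have hconst : HasDerivAt (fun s => L (γ₁ s, γ₂ s)) 0 0 := by
    simpa only [hinv] using hasDerivAt_const (0 : 𝕜) (L (γ₁ 0, γ₂ 0))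
  rw [← hL.hasFDerivAt.apply_prod_eq_fderiv_fst_add_fderiv_snd]
  exact hcomp.unique hconst

end PartialDerivatives

theorem Nat.eq_of_forall_succ_eq {α : Type*} {f : ℕ → α} {m n : ℕ}
    (h : ∀ k, m ≤ k → k < n → f (k + 1) = f k) : ∀ k, m ≤ k → k ≤ n → f k = f m := by
  intro k hmk
  induction k, hmk using Nat.le_induction with
  | base => exact fun _ => rfl
  | succ k hmk ih => exact fun hkn => (h k hmk hkn).trans (ih (Nat.le_of_succ_le hkn))

theorem stmt_5_general (d N : ℕ)
    (Ld : (Fin (2*d) → ℝ) × (Fin (2*d) → ℝ) → ℝ)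
    (hLd : Differentiable ℝ Ld)
    (Φ : ℝ → (Fin (2*d) → ℝ) → (Fin (2*d) → ℝ))
    (hΦdiff : ∀ y, DifferentiableAt ℝ (fun s => Φ s y) 0)
    (hΦ0 : Φ 0 = id)
    (hinv : ∀ s yk yk1, Ld (Φ s yk, Φ s yk1) = Ld (yk, yk1))
    -- infinitesimal generator
    (ξ : (Fin (2*d) → ℝ) → (Fin (2*d) → ℝ))
    (hξ : ∀ y, ξ y = deriv (fun s => Φ s y) 0)
    -- partial derivatives of the discrete Lagrangian
    (D₁ D₂ : (Fin (2*d) → ℝ) → (Fin (2*d) → ℝ) → (Fin (2*d) → ℝ) →L[ℝ] ℝ)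
    (hD₁ : ∀ a b, D₁ a b = fderiv ℝ (fun x => Ld (x, b)) a)
    (hD₂ : ∀ a b, D₂ a b = fderiv ℝ (fun x => Ld (a, x)) b)
    (y : ℕ → (Fin (2*d) → ℝ))
    (hDEL : ∀ k : ℕ, 1 ≤ k → k ≤ N - 1 →
      (fun w => D₂ (y (k-1)) (y k) w + D₁ (y k) (y (k+1)) w) = fun _ => (0:ℝ))
    (I : ℕ → ℝ)
    (hI : ∀ k : ℕ, I k = D₂ (y (k-1)) (y k) (ξ (y k))) :
    (∀ k l : ℕ, 1 ≤ k → k ≤ N → 1 ≤ l → l ≤ N → I k = I l) ∧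
    (∀ k : ℕ, 1 ≤ k → k ≤ N - 1 →
      I k = -(D₁ (y k) (y (k+1)) (ξ (y k)))) := by
  have hnoether : ∀ a b, D₁ a b (ξ a) + D₂ a b (ξ b) = 0 := fun a b => by
    rw [hD₁, hD₂, hξ a, hξ b]
    exact fderiv_fst_add_fderiv_snd_eq_zero_of_invariant (hLd _) (hΦdiff a).hasDerivAt
      (hΦdiff b).hasDerivAt (by rw [hΦ0, id]) (by rw [hΦ0, id]) (hinv · a b)
  have hmomentum : ∀ k, 1 ≤ k → k ≤ N - 1 → I k = -(D₁ (y k) (y (k+1)) (ξ (y k))) :=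
    fun k hk hkN => by
      rw [hI, eq_neg_iff_add_eq_zero]
      exact congrFun (hDEL k hk hkN) _
  have hstep : ∀ k, 1 ≤ k → k < N → I (k + 1) = I k := fun k hk hkN => by
    rw [hmomentum k hk (by omega), hI, Nat.add_sub_cancel, eq_neg_iff_add_eq_zero, add_comm]
    exact hnoether _ _
  refine ⟨fun k l hk hkN hl hlN => ?_, hmomentum⟩
  rw [Nat.eq_of_forall_succ_eq hstep k hk hkN, Nat.eq_of_forall_succ_eq hstep l hl hlN]

/-- Discrete Noether theorem for an invariant discrete Lagrangian. -/
theorem stmt_5 (d N : ℕ)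
    (Ld : (Fin (2*d) → ℝ) × (Fin (2*d) → ℝ) → ℝ)
    (hLd : Differentiable ℝ Ld)
    (Φ : ℝ → (Fin (2*d) → ℝ) → (Fin (2*d) → ℝ))
    (hΦdiffeo : ∀ s, Function.Bijective (Φ s))
    (hΦdiff : ∀ y, DifferentiableAt ℝ (fun s => Φ s y) 0)
    (hΦ0 : Φ 0 = id)
    (hinv : ∀ s yk yk1, Ld (Φ s yk, Φ s yk1) = Ld (yk, yk1))
    -- infinitesimal generator
    (ξ : (Fin (2*d) → ℝ) → (Fin (2*d) → ℝ))
    (hξ : ∀ y, ξ y = deriv (fun s => Φ s y) 0)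
    -- partial derivatives of the discrete Lagrangian
    (D₁ D₂ : (Fin (2*d) → ℝ) → (Fin (2*d) → ℝ) → (Fin (2*d) → ℝ) →L[ℝ] ℝ)
    (hD₁ : ∀ a b, D₁ a b = fderiv ℝ (fun x => Ld (x, b)) a)
    (hD₂ : ∀ a b, D₂ a b = fderiv ℝ (fun x => Ld (a, x)) b)
    (y : ℕ → (Fin (2*d) → ℝ))
    (hDEL : ∀ k : ℕ, 1 ≤ k → k ≤ N - 1 →
      (fun w => D₂ (y (k-1)) (y k) w + D₁ (y k) (y (k+1)) w) = fun _ => (0:ℝ))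
    (I : ℕ → ℝ)
    (hI : ∀ k : ℕ, I k = D₂ (y (k-1)) (y k) (ξ (y k))) :
    (∀ k l : ℕ, 1 ≤ k → k ≤ N → 1 ≤ l → l ≤ N → I k = I l) ∧
    (∀ k : ℕ, 1 ≤ k → k ≤ N - 1 →
      I k = -(D₁ (y k) (y (k+1)) (ξ (y k)))) :=
  stmt_5_general d N Ld hLd Φ hΦdiff hΦ0 hinv ξ hξ D₁ D₂ hD₁ hD₂ y hDEL I hI
end

section
/- Fix n, m, N ∈ ℕ, h > 0, α, γ ∈ [0,1], smooth maps f : ℝⁿ × ℝⁿ → ℝⁿ, ρ : ℝⁿ → Matrix (Fin n) (Fin m) ℝ, g : ℝⁿ → Matrix (Fin m) (Fin m) ℝ. For sequences q : Fin (N+1) → ℝⁿ, λ : Fin (N+1) → ℝⁿ, U⁽¹⁾, U⁽²⁾ : Fin N → ℝᵐ, define Δq_k = (q_{k+1}−q_k)/h, q̄_k^γ = γ q_k + (1−γ) q_{k+1}, λ̄_k^γ = γ λ_k + (1−γ) λ_{k+1}, and the approximate discrete control-dependent Lagrangian L^E_{d,k} = h α [Δλ_k ⬝ Δq_k + λ̄_k^γ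 ⬝ (f(q̄_k^γ, Δq_k) + ρ(q̄_k^γ) U_k^{(1)}) − (1/2) U_k^{(1)} ⬝ (g(q̄_k^γ) U_k^{(1)})] + h(1−α)[Δλ_k ⬝ Δq_k + λ̄_k^{1−γ} ⬝ (f(q̄_k^{1−γ}, Δq_k) + ρ(q̄_k^{1−γ}) U_k^{(2)}) − (1/2) U_k^{(2)} ⬝ (g(q̄_k^{1−γ}) U_k^{(2)})]. If g(q) is invertible for all q and the discrete minimisation conditions ρ(q̄_k^γ)ᵀ λ̄_k^γ = g(q̄_k^γ) U_k^{(1)} and ρ(q̄_k^{1−γ})ᵀ λ̄_k^{1−γ} = g(q̄_k^{1−γ}) U_k^{(2)} hold for all k, then L^E_{d,k} equals the approximate control-independent discrete Lagrangian L_{d,k} = h α [Δλ_k ⬝ Δq_k + λ̄_k^γ ⬝ f(q̄_k^γ, Δq_k) + (1/2) λ̄_k^γ ⬝ (b(q̄_k^γ) λ̄_k^γ)] + h(1−α)[Δλ_k ⬝ Δq_k + λ̄_k^{1−γ} ⬝ f(q̄_k^{1−γ}, Δq_k) + (1/2) λ̄_k^{1−γ} ⬝ (b(q̄_k^{1−γ})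 λ̄_k^{1−γ})], where b(q) = ρ(q) g(q)⁻¹ ρ(q)ᵀ. -/
open Matrix

attribute [local instance] Matrix.normedAddCommGroup Matrix.normedSpace

lemma key {n m : ℕ} (ρ : Matrix (Fin n) (Fin m) ℝ) (g : Matrix (Fin m) (Fin m) ℝ)
    (hg : IsUnit g) (lam : Fin n → ℝ) (U : Fin m → ℝ)
    (hmin : ρᵀ *ᵥ lam = g *ᵥ U) :
    lam ⬝ᵥ (ρ *ᵥ U) - (1/2) * (U ⬝ᵥ (g *ᵥ U))
      = (1/2) * (lam ⬝ᵥ ((ρ * g⁻¹ * ρᵀ) *ᵥ lam)) := by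
  have hdet : IsUnit g.det := (Matrix.isUnit_iff_isUnit_det g).mp hg
  have h1 : (ρ * g⁻¹ * ρᵀ) *ᵥ lam = ρ *ᵥ U := by
    rw [← Matrix.mulVec_mulVec, ← Matrix.mulVec_mulVec, hmin,
      Matrix.mulVec_mulVec U g⁻¹ g, Matrix.nonsing_inv_mul g hdet, Matrix.one_mulVec]
  have h2 : lam ⬝ᵥ (ρ *ᵥ U) = U ⬝ᵥ (g *ᵥ U) := by
    rw [Matrix.dotProduct_mulVec, ← Matrix.mulVec_transpose, hmin,
      dotProduct_comm]
  rw [h1, h2]; ring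


theorem stmt_7 (n m N : ℕ) (h : ℝ) (hh : 0 < h)
    (α γ : ℝ) (hα : α ∈ Set.Icc (0:ℝ) 1) (hγ : γ ∈ Set.Icc (0:ℝ) 1)
    (f : (Fin n → ℝ) × (Fin n → ℝ) → (Fin n → ℝ))
    (ρ : (Fin n → ℝ) → Matrix (Fin n) (Fin m) ℝ)
    (g : (Fin n → ℝ) → Matrix (Fin m) (Fin m) ℝ)
    (hf : ContDiff ℝ (⊤ : ℕ∞) f) (hρ : ContDiff ℝ (⊤ : ℕ∞) ρ) (hgsm : ContDiff ℝ (⊤ : ℕ∞) g)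
    (hginv : ∀ q, IsUnit (g q))
    (b : (Fin n → ℝ) → Matrix (Fin n) (Fin n) ℝ)
    (hb : ∀ q, b q = ρ q * (g q)⁻¹ * (ρ q)ᵀ)
    (q lam : ℕ → (Fin n → ℝ)) (U₁ U₂ : ℕ → (Fin m → ℝ))
    -- abbreviations: divided differences and averaged points
    (Δq Δlam : ℕ → (Fin n → ℝ)) (qbar lambar : ℝ → ℕ → (Fin n → ℝ))
    (hΔq : ∀ k, Δq k = h⁻¹ • (q (k+1) - q k))
    (hΔlam : ∀ k, Δlam k = h⁻¹ • (lam (k+1) - lam k))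
    (hqbar : ∀ s k, qbar s k = s • q k + (1 - s) • q (k+1))
    (hlambar : ∀ s k, lambar s k = s • lam k + (1 - s) • lam (k+1))
    -- discrete minimisation conditions
    (hmin₁ : ∀ k < N, (ρ (qbar γ k))ᵀ *ᵥ lambar γ k = g (qbar γ k) *ᵥ U₁ k)
    (hmin₂ : ∀ k < N, (ρ (qbar (1-γ) k))ᵀ *ᵥ lambar (1-γ) k = g (qbar (1-γ) k) *ᵥ U₂ k) :
    -- the control-dependent discrete Lagrangian equals the control-independent one
    ∀ k < N,
      (h * α * (Δlam k ⬝ᵥ Δq k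
          + lambar γ k ⬝ᵥ (f (qbar γ k, Δq k) + ρ (qbar γ k) *ᵥ U₁ k)
          - (1/2) * (U₁ k ⬝ᵥ (g (qbar γ k) *ᵥ U₁ k)))
        + h * (1 - α) * (Δlam k ⬝ᵥ Δq k
          + lambar (1-γ) k ⬝ᵥ (f (qbar (1-γ) k, Δq k) + ρ (qbar (1-γ) k) *ᵥ U₂ k)
          - (1/2) * (U₂ k ⬝ᵥ (g (qbar (1-γ) k) *ᵥ U₂ k))))
      =
      (h * α * (Δlam k ⬝ᵥ Δq k
          + lambar γ k ⬝ᵥ f (qbar γ k, Δq k)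
          + (1/2) * (lambar γ k ⬝ᵥ (b (qbar γ k) *ᵥ lambar γ k)))
        + h * (1 - α) * (Δlam k ⬝ᵥ Δq k
          + lambar (1-γ) k ⬝ᵥ f (qbar (1-γ) k, Δq k)
          + (1/2) * (lambar (1-γ) k ⬝ᵥ (b (qbar (1-γ) k) *ᵥ lambar (1-γ) k)))) := by
  intro k hk
  have e1 := key (ρ (qbar γ k)) (g (qbar γ k)) (hginv _) (lambar γ k) (U₁ k) (hmin₁ k hk)
  have e2 := key (ρ (qbar (1-γ) k)) (g (qbar (1-γ) k)) (hginv _) (lambar (1-γ) k) (U₂ k) (hmin₂ k hk)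
  rw [hb, hb, dotProduct_add, dotProduct_add]
  linear_combination h*α*e1 + h*(1-α)*e2
end

section
/- Let n ∈ ℕ, Φ(q) = A q + c for invertible A ∈ Matrix (Fin n) (Fin n) ℝ and c ∈ ℝⁿ, with cotangent-lifted action Φ̃(q, λ) = (A q + c, A^{−⊤} λ). Let E ∈ Matrix (Fin m) (Fin m) ℝ and ρ, g, f satisfy the equivariance conditions f(A q + c, A v) = A f(q, v), ρ(A q + c) E = A ρ(q), and Eᵀ g(A q + c) E = g(q) for all q, v. Then for any α, γ ∈ [0,1] the approximate discrete control-dependent Lagrangian L^E_d of the low-order family satisfies L^E_d(Φ̃(y_k), Φ̃(y_{k+1}), E U_k^{(1)}, E U_k^{(2)}, h) = L^E_d(y_k, y_{k+1}, U_k^{(1)}, U_k^{(2)}, h) for all y_k, y_{k+1} ∈ ℝⁿ × ℝⁿ, U_k^{(1)}, U_k^{(2)} ∈ ℝᵐ. -/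
open Matrix

theorem stmt_8 (n m : ℕ) (h : ℝ) (hh : 0 < h)
    (α γ : ℝ) (hα : α ∈ Set.Icc (0:ℝ) 1) (hγ : γ ∈ Set.Icc (0:ℝ) 1)
    (f : (Fin n → ℝ) × (Fin n → ℝ) → (Fin n → ℝ))
    (ρ : (Fin n → ℝ) → Matrix (Fin n) (Fin m) ℝ)
    (g : (Fin n → ℝ) → Matrix (Fin m) (Fin m) ℝ)
    -- the approximate discrete control-dependent Lagrangian of the low-order family
    (LEd : ((Fin n → ℝ) × (Fin n → ℝ)) → ((Fin n → ℝ) × (Fin n → ℝ)) →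
      (Fin m → ℝ) → (Fin m → ℝ) → ℝ)
    (hLEd : ∀ y₀ y₁ U₁ U₂, LEd y₀ y₁ U₁ U₂ =
      h * α * ((h⁻¹ • (y₁.2 - y₀.2)) ⬝ᵥ (h⁻¹ • (y₁.1 - y₀.1))
        + (γ • y₀.2 + (1-γ) • y₁.2) ⬝ᵥ
            (f (γ • y₀.1 + (1-γ) • y₁.1, h⁻¹ • (y₁.1 - y₀.1))
              + ρ (γ • y₀.1 + (1-γ) • y₁.1) *ᵥ U₁)
        - (1/2) * (U₁ ⬝ᵥ (g (γ • y₀.1 + (1-γ) • y₁.1) *ᵥ U₁)))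
      + h * (1-α) * ((h⁻¹ • (y₁.2 - y₀.2)) ⬝ᵥ (h⁻¹ • (y₁.1 - y₀.1))
        + ((1-γ) • y₀.2 + γ • y₁.2) ⬝ᵥ
            (f ((1-γ) • y₀.1 + γ • y₁.1, h⁻¹ • (y₁.1 - y₀.1))
              + ρ ((1-γ) • y₀.1 + γ • y₁.1) *ᵥ U₂)
        - (1/2) * (U₂ ⬝ᵥ (g ((1-γ) • y₀.1 + γ • y₁.1) *ᵥ U₂))))
    -- affine point transformation and its cotangent lift
    (A : Matrix (Fin n) (Fin n) ℝ) (hA : IsUnit A) (c : Fin n → ℝ)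
    (E : Matrix (Fin m) (Fin m) ℝ)
    -- equivariance hypotheses
    (hf : ∀ qv : (Fin n → ℝ) × (Fin n → ℝ),
      f (A *ᵥ qv.1 + c, A *ᵥ qv.2) = A *ᵥ f qv)
    (hρ : ∀ q : Fin n → ℝ, ρ (A *ᵥ q + c) * E = A * ρ q)
    (hg : ∀ q : Fin n → ℝ, Eᵀ * g (A *ᵥ q + c) * E = g q) :
    ∀ (y₀ y₁ : (Fin n → ℝ) × (Fin n → ℝ)) (U₁ U₂ : Fin m → ℝ),
      LEd (A *ᵥ y₀.1 + c, (A⁻¹)ᵀ *ᵥ y₀.2) (A *ᵥ y₁.1 + c, (A⁻¹)ᵀ *ᵥ y₁.2)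
          (E *ᵥ U₁) (E *ᵥ U₂)
        = LEd y₀ y₁ U₁ U₂ := by
  intro y₀ y₁ U₁ U₂
  have hinv : A⁻¹ * A = 1 :=
    Matrix.nonsing_inv_mul A ((Matrix.isUnit_iff_isUnit_det A).mp hA)
  -- pairing invariance
  have key : ∀ x y : Fin n → ℝ, ((A⁻¹)ᵀ *ᵥ x) ⬝ᵥ (A *ᵥ y) = x ⬝ᵥ y := by
    intro x y
    rw [Matrix.mulVec_transpose, ← Matrix.dotProduct_mulVec,
      Matrix.mulVec_mulVec, hinv, Matrix.one_mulVec]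
  -- control quadratic form invariance
  have hctrl : ∀ (q : Fin n → ℝ) (U : Fin m → ℝ),
      (E *ᵥ U) ⬝ᵥ (g (A *ᵥ q + c) *ᵥ (E *ᵥ U)) = U ⬝ᵥ (g q *ᵥ U) := by
    intro q U
    rw [Matrix.mulVec_mulVec, ← Matrix.vecMul_transpose,
      Matrix.dotProduct_mulVec, Matrix.vecMul_vecMul, ← Matrix.mul_assoc, hg,
      ← Matrix.dotProduct_mulVec]
  -- averages of transformed points
  have havg : ∀ (s : ℝ) (q₀ q₁ : Fin n → ℝ),
      s • (A *ᵥ q₀ + c) + (1-s) • (A *ᵥ q₁ + c)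
        = A *ᵥ (s • q₀ + (1-s) • q₁) + c := by
    intro s q₀ q₁
    rw [Matrix.mulVec_add, Matrix.mulVec_smul, Matrix.mulVec_smul]
    module
  have havgl : ∀ (s : ℝ) (p₀ p₁ : Fin n → ℝ),
      s • ((A⁻¹)ᵀ *ᵥ p₀) + (1-s) • ((A⁻¹)ᵀ *ᵥ p₁)
        = (A⁻¹)ᵀ *ᵥ (s • p₀ + (1-s) • p₁) := by
    intro s p₀ p₁
    rw [Matrix.mulVec_add, Matrix.mulVec_smul, Matrix.mulVec_smul]
  have hdiff : ∀ q₀ q₁ : Fin n → ℝ,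
      h⁻¹ • ((A *ᵥ q₁ + c) - (A *ᵥ q₀ + c)) = A *ᵥ (h⁻¹ • (q₁ - q₀)) := by
    intro q₀ q₁
    rw [Matrix.mulVec_smul, Matrix.mulVec_sub]
    module
  have hdiffl : ∀ p₀ p₁ : Fin n → ℝ,
      h⁻¹ • ((A⁻¹)ᵀ *ᵥ p₁ - (A⁻¹)ᵀ *ᵥ p₀) = (A⁻¹)ᵀ *ᵥ (h⁻¹ • (p₁ - p₀)) := by
    intro p₀ p₁
    rw [Matrix.mulVec_smul, Matrix.mulVec_sub]
  -- force term invariance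
  have hforce : ∀ (s : ℝ) (U : Fin m → ℝ),
      (s • ((A⁻¹)ᵀ *ᵥ y₀.2) + (1-s) • ((A⁻¹)ᵀ *ᵥ y₁.2)) ⬝ᵥ
        (f (s • (A *ᵥ y₀.1 + c) + (1-s) • (A *ᵥ y₁.1 + c),
            h⁻¹ • ((A *ᵥ y₁.1 + c) - (A *ᵥ y₀.1 + c)))
          + ρ (s • (A *ᵥ y₀.1 + c) + (1-s) • (A *ᵥ y₁.1 + c)) *ᵥ (E *ᵥ U))
      = (s • y₀.2 + (1-s) • y₁.2) ⬝ᵥ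
        (f (s • y₀.1 + (1-s) • y₁.1, h⁻¹ • (y₁.1 - y₀.1))
          + ρ (s • y₀.1 + (1-s) • y₁.1) *ᵥ U) := by
    intro s U
    rw [havg, havgl, hdiff]
    rw [hf (s • y₀.1 + (1-s) • y₁.1, h⁻¹ • (y₁.1 - y₀.1))]
    rw [Matrix.mulVec_mulVec, hρ, ← Matrix.mulVec_mulVec, ← Matrix.mulVec_add, key]
  rw [hLEd, hLEd]
  dsimp only
  have e1 := hforce γ U₁
  have e2 := hforce (1-γ) U₂
  simp only [sub_sub_cancel] at e2
  have e3 := havg (1-γ) y₀.1 y₁.1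
  simp only [sub_sub_cancel] at e3
  rw [e1, e2, havg, e3, hdiff, hdiffl, key, hctrl, hctrl]
end

section
/- Let h > 0, α, γ ∈ [0,1], and let F_k^γ, F_k^{1−γ} : ℝⁿ be arbitrary vectors (standing for f + ρu evaluations) for k = 0, …, N−1. Define for each interval k the scheme v_{k+1} = v_k + h[α F_k^γ + (1−α) F_k^{1−γ}] and q_{k+1} = q_k + h v_k + h²[αγ F_k^γ + (1−α)(1−γ) F_k^{1−γ}]. Then eliminating the velocities yields, for 1 ≤ k ≤ N−1, the second-order divided-difference relation (q_{k+1} − 2 q_k + q_{k−1})/h² = α[γ F_k^γ + (1−γ) F_{k−1}^γ] + (1−α)[(1−γ) F_k^{1−γ} + γ F_{k−1}^{1−γ}]. -/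
theorem stmt_12 (n N : ℕ) (h : ℝ) (hh : 0 < h)
    (α γ : ℝ) (hα : α ∈ Set.Icc (0:ℝ) 1) (hγ : γ ∈ Set.Icc (0:ℝ) 1)
    (F₁ F₂ : ℕ → (Fin n → ℝ))  -- Fᵏ^γ and Fᵏ^{1-γ}
    (q v : ℕ → (Fin n → ℝ))
    (hv : ∀ k < N, v (k+1) = v k + h • (α • F₁ k + (1 - α) • F₂ k))
    (hq : ∀ k < N, q (k+1) = q k + h • v k
      + (h^2) • ((α * γ) • F₁ k + ((1 - α) * (1 - γ)) • F₂ k)) :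
    ∀ k : ℕ, 1 ≤ k → k ≤ N - 1 →
      (h^2)⁻¹ • (q (k+1) - (2:ℝ) • q k + q (k-1))
        = α • (γ • F₁ k + (1 - γ) • F₁ (k-1))
          + (1 - α) • ((1 - γ) • F₂ k + γ • F₂ (k-1)) := by
  intro k hk1 hk2
  obtain ⟨m, rfl⟩ : ∃ m, k = m + 1 := ⟨k - 1, by omega⟩
  have hm : m < N := by omega
  have hm1 : m + 1 < N := by omega
  have hne : h ≠ 0 := ne_of_gt hh
  simp only [Nat.add_sub_cancel]
  funext i
  have h1 := congrFun (hq (m+1) hm1) i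
  have h2 := congrFun (hq m hm) i
  have h3 := congrFun (hv m hm) i
  simp only [Pi.add_apply, Pi.smul_apply, Pi.sub_apply, smul_eq_mul] at h1 h2 h3 ⊢
  field_simp
  linear_combination h1 - h2 + h * h3
end

section
/- Let L : ℝ^{2d} × ℝ^{2d} → ℝ be smooth and let y : ℝ → ℝ^{2d} be C². For α, γ ∈ [0,1] define the discrete Lagrangian value L_d(h) = h α L(γ y(t) + (1−γ) y(t+h), (y(t+h) − y(t))/h) + h(1−α) L((1−γ) y(t) + γ y(t+h), (y(t+h) − y(t))/h). Then as h → 0, L_d(h) = h L(y(t), ẏ(t)) + (h²/2)[2(α(1−γ) + (1−α)γ) D₁L(y(t),ẏ(t)) ẏ(t) + D₂L(y(t),ẏ(t)) ÿ(t)] + o(h²). -/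
open Asymptotics

-- second-order Taylor, little-o form
lemma taylor2 {E : Type*} [NormedAddCommGroup E] [NormedSpace ℝ E] {y : ℝ → E}
    (hy : ContDiff ℝ 2 y) (t : ℝ) :
    (fun h : ℝ => y (t+h) - y t - h • deriv y t - (h^2/2) • deriv (deriv y) t)
      =o[nhds 0] fun h : ℝ => h^2 := by
  obtain ⟨hy1, -, hy2⟩ := contDiff_succ_iff_deriv.mp (show ContDiff ℝ (1+1) y from by norm_num [hy])
  have hy2d : Differentiable ℝ (deriv y) := hy2.differentiable one_ne_zero
  set c := deriv (deriv y) t with hc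
  set g : ℝ → E := fun h => y (t+h) - y t - h • deriv y t - (h^2/2) • c with hg
  set g' : ℝ → E := fun h => deriv y (t+h) - deriv y t - h • c with hg'
  have hgd : ∀ h : ℝ, HasDerivAt g (g' h) h := by
    intro h
    have h1 : HasDerivAt (fun h : ℝ => y (t+h)) (deriv y (t+h)) h := by
      simpa [Function.comp_def] using (HasDerivAt.scomp h (hy1 (t+h)).hasDerivAt ((hasDerivAt_id h).const_add t))
    have h2 : HasDerivAt (fun h : ℝ => h • deriv y t) (deriv y t) h := by
      simpa using (hasDerivAt_id h).smul_const (deriv y t)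
    have h3 : HasDerivAt (fun h : ℝ => (h^2/2) • c) (h • c) h := by
      have := ((hasDerivAt_pow 2 h).div_const 2).smul_const c
      convert this using 1
      module
    exact ((h1.sub_const (y t)).sub h2).sub h3
  have hgo : g' =o[nhds 0] fun h : ℝ => h := by
    have h1 : HasDerivAt (fun h : ℝ => deriv y (t+h)) c 0 := by
      have h0 : HasDerivAt (deriv y) c (t + id (0:ℝ)) := by
        simpa [hc] using (hy2d t).hasDerivAt
      simpa [Function.comp_def] using (HasDerivAt.scomp (0:ℝ) h0 ((hasDerivAt_id (0:ℝ)).const_add t))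
    have := hasDerivAt_iff_isLittleO.mp h1
    simpa [hg'] using this
  rw [isLittleO_iff]
  intro ε εpos
  have := isLittleO_iff.mp hgo εpos
  rw [Metric.eventually_nhds_iff] at this ⊢
  obtain ⟨δ, δpos, hδ⟩ := this
  refine ⟨δ, δpos, fun {h} hh => ?_⟩
  simp only [Real.dist_eq, sub_zero] at hh
  have key : ‖g h - g 0‖ ≤ (ε * |h|) * ‖h - 0‖ := by
    apply Convex.norm_image_sub_le_of_norm_hasDerivWithin_le
      (f' := g') (s := Set.Icc (-|h|) (|h|))
    · intro x hx
      exact (hgd x).hasDerivWithinAt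
    · intro x hx
      have hxh : |x| ≤ |h| := abs_le.mpr ⟨hx.1, hx.2⟩
      have : ‖g' x‖ ≤ ε * ‖x‖ := by
        apply hδ
        simp only [Real.dist_eq, sub_zero]
        exact lt_of_le_of_lt hxh hh
      refine this.trans ?_
      have : ε * |x| ≤ ε * |h| := by nlinarith
      simpa using this
    · exact convex_Icc _ _
    · constructor <;> simp [abs_nonneg]
    · constructor <;> [exact neg_abs_le h; exact le_abs_self h]
  have hg0 : g 0 = 0 := by simp [hg]
  rw [hg0, sub_zero, sub_zero] at key
  calc ‖g h‖ ≤ ε * |h| * ‖h‖ := key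
    _ = ε * ‖h^2‖ := by rw [Real.norm_eq_abs, Real.norm_eq_abs, abs_pow]; ring

lemma smul_inv_littleo {E : Type*} [NormedAddCommGroup E] [NormedSpace ℝ E] {g : ℝ → E}
    (hgo : g =o[nhds 0] fun h : ℝ => h^2) :
    (fun h : ℝ => h⁻¹ • g h) =o[nhds 0] fun h : ℝ => h := by
  rw [isLittleO_iff]
  intro ε εpos
  filter_upwards [isLittleO_iff.mp hgo εpos] with h hh
  rcases eq_or_ne h 0 with rfl | h0
  · simp
  · rw [norm_smul]
    calc ‖h⁻¹‖ * ‖g h‖ ≤ ‖h⁻¹‖ * (ε * ‖h^2‖) := by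
          exact mul_le_mul_of_nonneg_left hh (norm_nonneg _)
      _ = ε * ‖h‖ := by
          rw [norm_inv, Real.norm_eq_abs, Real.norm_eq_abs, abs_pow]
          have : |h| ≠ 0 := by simpa using h0
          field_simp

lemma vHasDeriv {E : Type*} [NormedAddCommGroup E] [NormedSpace ℝ E] {y : ℝ → E}
    (hy : ContDiff ℝ 2 y) (t : ℝ) :
    HasDerivAt (fun h : ℝ => if h = 0 then deriv y t else h⁻¹ • (y (t+h) - y t))
      ((1/2 : ℝ) • deriv (deriv y) t) 0 := by
  rw [hasDerivAt_iff_isLittleO]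
  have key := smul_inv_littleo (taylor2 hy t)
  apply IsLittleO.congr' key (Filter.Eventually.of_forall fun h => ?_)
    (Filter.Eventually.of_forall fun h => by simp)
  rcases eq_or_ne h 0 with rfl | h0
  · simp
  · simp only [if_neg h0, if_pos rfl, sub_zero]
    rw [smul_sub, smul_sub, smul_smul, smul_smul, inv_mul_cancel₀ h0, one_smul, smul_smul]
    congr 2
    field_simp

theorem stmt_13 (d : ℕ)
    (L : (Fin (2*d) → ℝ) × (Fin (2*d) → ℝ) → ℝ) (hL : ContDiff ℝ (⊤ : ℕ∞) L)
    (y : ℝ → (Fin (2*d) → ℝ)) (hy : ContDiff ℝ 2 y)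
    (α γ : ℝ) (hα : α ∈ Set.Icc (0:ℝ) 1) (hγ : γ ∈ Set.Icc (0:ℝ) 1)
    (t : ℝ)
    (Ld : ℝ → ℝ)
    (hLd : ∀ h : ℝ, Ld h =
      h * α * L (γ • y t + (1 - γ) • y (t + h), h⁻¹ • (y (t + h) - y t)) +
      h * (1 - α) * L ((1 - γ) • y t + γ • y (t + h), h⁻¹ • (y (t + h) - y t))) :
    (fun h : ℝ => Ld h -
        (h * L (y t, deriv y t) + h^2 / 2 *
          (2 * (α * (1 - γ) + (1 - α) * γ) *
              (fderiv ℝ (fun x => L (x, deriv y t)) (y t) (deriv y t))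
            + (fderiv ℝ (fun w => L (y t, w)) (deriv y t) (deriv (deriv y) t)))))
      =o[nhds 0] fun h : ℝ => h^2 := by
  set vt := deriv y t with hvt
  set c := deriv (deriv y) t with hcdef
  set v : ℝ → (Fin (2*d) → ℝ) := fun h => if h = 0 then vt else h⁻¹ • (y (t+h) - y t) with hvdef
  have hLdiff : Differentiable ℝ L := hL.differentiable (by simp)
  have hy1 : Differentiable ℝ y := hy.differentiable two_ne_zero
  have hv : HasDerivAt v ((1/2 : ℝ) • c) 0 := vHasDeriv hy t
  have hyc : HasDerivAt (fun h : ℝ => y (t+h)) vt 0 := by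
    have h0 : HasDerivAt y vt (t + id (0:ℝ)) := by simpa [hvt] using (hy1 t).hasDerivAt
    simpa [Function.comp_def] using HasDerivAt.scomp (0:ℝ) h0 ((hasDerivAt_id (0:ℝ)).const_add t)
  set c1 : ℝ → (Fin (2*d) → ℝ) := fun h => γ • y t + (1 - γ) • y (t+h) with hc1def
  set c2 : ℝ → (Fin (2*d) → ℝ) := fun h => (1 - γ) • y t + γ • y (t+h) with hc2def
  have hc1 : HasDerivAt c1 ((1-γ) • vt) 0 := (hyc.const_smul (1-γ)).const_add (γ • y t)
  have hc2 : HasDerivAt c2 (γ • vt) 0 := (hyc.const_smul γ).const_add ((1-γ) • y t)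
  have hc10 : c1 0 = y t := by
    simp only [hc1def, add_zero]
    module
  have hc20 : c2 0 = y t := by
    simp only [hc2def, add_zero]
    module
  have hv0 : v 0 = vt := by simp [hvdef]
  set D := fderiv ℝ L (y t, vt) with hDdef
  have hDL : HasFDerivAt L D (y t, vt) := (hLdiff (y t, vt)).hasFDerivAt
  have hM1 : HasDerivAt (fun h => L (c1 h, v h)) (D ((1-γ) • vt, (1/2 : ℝ) • c)) 0 := by
    have hp : HasDerivAt (fun h => (c1 h, v h)) (((1-γ) • vt, (1/2 : ℝ) • c)) 0 := hc1.prodMk hv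
    have hDL' : HasFDerivAt L D (c1 0, v 0) := by rw [hc10, hv0]; exact hDL
    exact hDL'.comp_hasDerivAt 0 hp
  have hM2 : HasDerivAt (fun h => L (c2 h, v h)) (D (γ • vt, (1/2 : ℝ) • c)) 0 := by
    have hp : HasDerivAt (fun h => (c2 h, v h)) ((γ • vt, (1/2 : ℝ) • c)) 0 := hc2.prodMk hv
    have hDL' : HasFDerivAt L D (c2 0, v 0) := by rw [hc20, hv0]; exact hDL
    exact hDL'.comp_hasDerivAt 0 hp
  set M : ℝ → ℝ := fun h => α * L (c1 h, v h) + (1 - α) * L (c2 h, v h) with hMdef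
  set m : ℝ := α * D ((1-γ) • vt, (1/2 : ℝ) • c) + (1 - α) * D (γ • vt, (1/2 : ℝ) • c) with hmdef
  have hM : HasDerivAt M m 0 := (hM1.const_mul α).add (hM2.const_mul (1-α))
  have hM0 : M 0 = L (y t, vt) := by
    simp only [hMdef, hc10, hc20, hv0]
    ring
  have hLdM : ∀ h, Ld h = h * M h := by
    intro h
    rcases eq_or_ne h 0 with rfl | h0
    · rw [hLd 0]; ring
    · rw [hLd h]
      simp only [hMdef, hvdef, if_neg h0]
      ring
  -- partial derivatives
  have hD1 : ∀ u : Fin (2*d) → ℝ, fderiv ℝ (fun x => L (x, vt)) (y t) u = D (u, 0) := by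
    intro u
    have h1 : HasFDerivAt (fun x : Fin (2*d) → ℝ => L (x, vt))
        (D.comp (ContinuousLinearMap.inl ℝ _ _)) (y t) :=
      hDL.comp (y t) (hasFDerivAt_prodMk_left (y t) vt)
    rw [h1.fderiv]
    simp
  have hD2 : ∀ w : Fin (2*d) → ℝ, fderiv ℝ (fun w' => L (y t, w')) vt w = D (0, w) := by
    intro w
    have h1 : HasFDerivAt (fun w' : Fin (2*d) → ℝ => L (y t, w'))
        (D.comp (ContinuousLinearMap.inr ℝ _ _)) vt :=
      hDL.comp vt (hasFDerivAt_prodMk_right (y t) vt)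
    rw [h1.fderiv]
    simp
  have hsplit : ∀ (a b : ℝ), D (a • vt, b • c) = a * D (vt, 0) + b * D (0, c) := by
    intro a b
    have : ((a • vt, b • c) : _ × _) = a • ((vt, (0 : Fin (2*d) → ℝ))) + b • (((0 : Fin (2*d) → ℝ), c)) := by
      simp [Prod.ext_iff]
    rw [this, map_add, map_smul, map_smul, smul_eq_mul, smul_eq_mul]
  -- little-o assembly
  have hMo : (fun h : ℝ => M h - M 0 - (h - 0) • m) =o[nhds 0] fun h : ℝ => h - 0 :=
    hasDerivAt_iff_isLittleO.mp hM
  have key : (fun h : ℝ => h * (M h - M 0 - h * m)) =o[nhds 0] fun h : ℝ => h^2 := by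
    have := (isBigO_refl (fun h : ℝ => h) (nhds 0)).mul_isLittleO hMo
    apply this.congr' (Filter.Eventually.of_forall fun h => by simp)
      (Filter.Eventually.of_forall fun h => by simp [sq])
  apply key.congr' (Filter.Eventually.of_forall fun h => ?_) (Filter.Eventually.of_forall fun h => rfl)
  rw [hLdM h, hM0, hmdef, hsplit, hsplit, ← hD1 vt, ← hD2 c]
  ring
end
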